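/- For every finite graph G, the set of friendly separations of G is a nested set of separations. -/
import Mathlib


open Set

variable {V : Type*}

/-- A separation, represented as an ordered pair of sides (standing for the
unordered pair `{A, B}`). -/
abbrev GSep (V : Type*) := Set V × Set V

/-- The order of a separation: the size of its separator `A ∩ B`. -/
noncomputable def sOrd (s : GSep V) : ℕ := (s.1 ∩ s.2).ncard

/-- `(A, B)` is a separation of `G`: the sides cover `V (G)` and there is no
edge between `A \ B` and `B \ A`. -/
def IsSep (G : SimpleGraph V) (s : GSep V) : Prop :=
  s.1 ∪ s.2 = Set.univ ∧ ∀ a ∈ s.1 \ s.2, ∀ b ∈ s.2 \ s.1, ¬ G.Adj a b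

/-- A separation is proper if both `A \ B` and `B \ A` are nonempty. -/
def IsProper (s : GSep V) : Prop := (s.1 \ s.2).Nonempty ∧ (s.2 \ s.1).Nonempty

/-- Two separations are nested if, after possibly renaming their sides,
`A ⊆ C` and `B ⊇ D`. -/
def Nested (s t : GSep V) : Prop :=
  (s.1 ⊆ t.1 ∧ t.2 ⊆ s.2) ∨ (s.1 ⊆ t.2 ∧ t.1 ⊆ s.2) ∨
  (s.2 ⊆ t.1 ∧ t.2 ⊆ s.1) ∨ (s.2 ⊆ t.2 ∧ t.1 ⊆ s.1)

/-- Two separations cross if they are not nested. -/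
def Crosses (s t : GSep V) : Prop := ¬ Nested s t

/-- The corner `(A ∩ C, B ∪ D)` of two (crossing) separations `(A,B)`, `(C,D)`.
The four corners of `s, t` are `corner s t`, `corner s t.swap`,
`corner s.swap t` and `corner s.swap t.swap`; two corners are opposite if both
side choices are opposite, and two distinct corners lie on the same side of `s`
if they use the same side of `s`. -/
def corner (s t : GSep V) : GSep V := (s.1 ∩ t.1, s.2 ∪ t.2)

/-- An entanglement in `G`: a nonempty set of proper separations of `G`
(closed under swapping sides, i.e. a set of unordered separations) such that
whenever `s ∈ ε` is crossed by a separation `t` of `G` so that the two corners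
lying on the same side of `s` have order at most `sOrd s`, at least one of
these corners has order exactly `sOrd s` and lies in `ε`. -/
def IsEntanglement (G : SimpleGraph V) (ε : Set (GSep V)) : Prop :=
  ε.Nonempty ∧
  (∀ s ∈ ε, IsSep G s ∧ IsProper s) ∧
  (∀ s ∈ ε, Prod.swap s ∈ ε) ∧
  ∀ s ∈ ε, ∀ t : GSep V, IsSep G t → Crosses s t →
    sOrd (corner s t) ≤ sOrd s → sOrd (corner s (Prod.swap t)) ≤ sOrd s →
    (sOrd (corner s t) = sOrd s ∧ corner s t ∈ ε) ∨
    (sOrd (corner s (Prod.swap t)) = sOrd s ∧ corner s (Prod.swap t) ∈ ε)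

/-- The separations of `G` lying in some entanglement. -/
def EntSeps (G : SimpleGraph V) : Set (GSep V) :=
  {t | ∃ ε, IsEntanglement G ε ∧ t ∈ ε}

/-- The crossing number of `s`: the number of separations lying in
entanglements in `G` which are crossed by `s`. -/
noncomputable def xnum (G : SimpleGraph V) (s : GSep V) : ℕ :=
  {t ∈ EntSeps G | Crosses s t}.ncard

/-- A separation in an entanglement `ε` is friendly if no other separation in
`ε` crosses fewer separations in entanglements in `G`. -/
def Friendly (G : SimpleGraph V) (s : GSep V) : Prop :=
  ∃ ε, IsEntanglement G ε ∧ s ∈ ε ∧ ∀ t ∈ ε, xnum G s ≤ xnum G t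


section AuxLemmas

variable {G : SimpleGraph V}

lemma nested_refl (s : GSep V) : Nested s s := Or.inl ⟨subset_rfl, subset_rfl⟩

lemma nested_symm {s t : GSep V} (h : Nested s t) : Nested t s := by
  unfold Nested at *; tauto

lemma nested_swap_left {s t : GSep V} : Nested (Prod.swap s) t ↔ Nested s t := by
  unfold Nested; simp only [Prod.fst_swap, Prod.snd_swap]; tauto

lemma nested_swap_right {s t : GSep V} : Nested s (Prod.swap t) ↔ Nested s t := by
  unfold Nested; simp only [Prod.fst_swap, Prod.snd_swap]; tauto

lemma crosses_symm {s t : GSep V} (h : Crosses s t) : Crosses t s :=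
  fun hn => h (nested_symm hn)

lemma crosses_swap_left {s t : GSep V} (h : Crosses s t) : Crosses (Prod.swap s) t :=
  fun hn => h (nested_swap_left.mp hn)

lemma crosses_swap_right {s t : GSep V} (h : Crosses s t) : Crosses s (Prod.swap t) :=
  fun hn => h (nested_swap_right.mp hn)

lemma corner_comm (s t : GSep V) : corner s t = corner t s := by
  unfold corner
  rw [Set.inter_comm, Set.union_comm]

lemma sOrd_swap (s : GSep V) : sOrd (Prod.swap s) = sOrd s := by
  unfold sOrd
  rw [Prod.fst_swap, Prod.snd_swap, Set.inter_comm]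

lemma nested_left_corner (s t : GSep V) : Nested s (corner s t) :=
  Or.inr (Or.inr (Or.inr ⟨subset_union_left, inter_subset_left⟩))

lemma nested_right_corner (s t : GSep V) : Nested t (corner s t) :=
  Or.inr (Or.inr (Or.inr ⟨subset_union_right, inter_subset_right⟩))

/-- If `r` is nested with both `s` and `t`, and `s` crosses `t`, then `r` is
nested with the corner of `s` and `t`. -/
lemma nested_corner_of_nested {r s t : GSep V} (hst : Crosses s t)
    (hrs : Nested r s) (hrt : Nested r t) : Nested r (corner s t) := by
  unfold Nested at hrs hrt
  rcases hrs with ⟨h1, h2⟩ | ⟨h1, h2⟩ | ⟨h1, h2⟩ | ⟨h1, h2⟩ <;>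
    rcases hrt with ⟨h3, h4⟩ | ⟨h3, h4⟩ | ⟨h3, h4⟩ | ⟨h3, h4⟩
  · exact Or.inl ⟨subset_inter h1 h3, union_subset h2 h4⟩
  · exact Or.inr (Or.inl ⟨h3.trans subset_union_right, inter_subset_right.trans h4⟩)
  · exact absurd (Or.inr (Or.inr (Or.inl ⟨h2.trans h3, h4.trans h1⟩))) hst
  · exact absurd (Or.inr (Or.inr (Or.inr ⟨h2.trans h3, h4.trans h1⟩))) hst
  · exact Or.inr (Or.inl ⟨h1.trans subset_union_left, inter_subset_left.trans h2⟩)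
  · exact Or.inr (Or.inl ⟨h1.trans subset_union_left, inter_subset_left.trans h2⟩)
  · exact absurd (Or.inl ⟨h2.trans h3, h4.trans h1⟩) hst
  · exact absurd (Or.inr (Or.inl ⟨h2.trans h3, h4.trans h1⟩)) hst
  · exact absurd (Or.inr (Or.inr (Or.inl ⟨h2.trans h3, h4.trans h1⟩))) hst
  · exact absurd (Or.inr (Or.inr (Or.inr ⟨h2.trans h3, h4.trans h1⟩))) hst
  · exact Or.inr (Or.inr (Or.inl ⟨subset_inter h1 h3, union_subset h2 h4⟩))
  · exact Or.inr (Or.inr (Or.inr ⟨h3.trans subset_union_right, inter_subset_right.trans h4⟩))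
  · exact absurd (Or.inl ⟨h2.trans h3, h4.trans h1⟩) hst
  · exact absurd (Or.inr (Or.inl ⟨h2.trans h3, h4.trans h1⟩)) hst
  · exact Or.inr (Or.inr (Or.inr ⟨h1.trans subset_union_left, inter_subset_left.trans h2⟩))
  · exact Or.inr (Or.inr (Or.inr ⟨h1.trans subset_union_left, inter_subset_left.trans h2⟩))

/-- If `r` is nested with `s`, then `r` is nested with one of each pair of
opposite corners of `s` and `t`. -/
lemma nested_opp_of_nested_left {r s t : GSep V} (h : Nested r s) :
    Nested r (corner s t) ∨ Nested r (corner (Prod.swap s) (Prod.swap t)) := by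
  unfold Nested at h
  rcases h with ⟨h1, h2⟩ | ⟨h1, h2⟩ | ⟨h1, h2⟩ | ⟨h1, h2⟩
  · exact Or.inr (Or.inr (Or.inl ⟨h1.trans subset_union_left, inter_subset_left.trans h2⟩))
  · exact Or.inl (Or.inr (Or.inl ⟨h1.trans subset_union_left, inter_subset_left.trans h2⟩))
  · exact Or.inr (Or.inr (Or.inr (Or.inr ⟨h1.trans subset_union_left, inter_subset_left.trans h2⟩)))
  · exact Or.inl (Or.inr (Or.inr (Or.inr ⟨h1.trans subset_union_left, inter_subset_left.trans h2⟩)))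

lemma nested_opp_of_nested_right {r s t : GSep V} (h : Nested r t) :
    Nested r (corner s t) ∨ Nested r (corner (Prod.swap s) (Prod.swap t)) := by
  unfold Nested at h
  rcases h with ⟨h1, h2⟩ | ⟨h1, h2⟩ | ⟨h1, h2⟩ | ⟨h1, h2⟩
  · exact Or.inr (Or.inr (Or.inl ⟨h1.trans subset_union_right, inter_subset_right.trans h2⟩))
  · exact Or.inl (Or.inr (Or.inl ⟨h1.trans subset_union_right, inter_subset_right.trans h2⟩))
  · exact Or.inr (Or.inr (Or.inr (Or.inr ⟨h1.trans subset_union_right, inter_subset_right.trans h2⟩)))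
  · exact Or.inl (Or.inr (Or.inr (Or.inr ⟨h1.trans subset_union_right, inter_subset_right.trans h2⟩)))

lemma ncard_submod_aux [Finite V] (A B C D : Set V) :
    ((A ∩ C) ∩ (B ∪ D)).ncard + ((B ∩ D) ∩ (A ∪ C)).ncard ≤ (A ∩ B).ncard + (C ∩ D).ncard := by
  have hu : ((A ∩ C) ∩ (B ∪ D)) ∪ ((B ∩ D) ∩ (A ∪ C)) ⊆ (A ∩ B) ∪ (C ∩ D) := by
    intro x hx
    simp only [Set.mem_union, Set.mem_inter_iff] at hx ⊢
    tauto
  have hi : ((A ∩ C) ∩ (B ∪ D)) ∩ ((B ∩ D) ∩ (A ∪ C)) ⊆ (A ∩ B) ∩ (C ∩ D) := by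
    intro x hx
    simp only [Set.mem_union, Set.mem_inter_iff] at hx ⊢
    tauto
  have e1 := Set.ncard_union_add_ncard_inter ((A ∩ C) ∩ (B ∪ D)) ((B ∩ D) ∩ (A ∪ C))
    (Set.toFinite _) (Set.toFinite _)
  have e2 := Set.ncard_union_add_ncard_inter (A ∩ B) (C ∩ D) (Set.toFinite _) (Set.toFinite _)
  have l1 := Set.ncard_le_ncard hu (Set.toFinite _)
  have l2 := Set.ncard_le_ncard hi (Set.toFinite _)
  omega

/-- Submodularity for opposite corners. -/
lemma sOrd_corner_add [Finite V] (s t : GSep V) :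
    sOrd (corner s t) + sOrd (corner (Prod.swap s) (Prod.swap t)) ≤ sOrd s + sOrd t :=
  ncard_submod_aux s.1 s.2 t.1 t.2

lemma xnum_swap (G : SimpleGraph V) (t : GSep V) : xnum G (Prod.swap t) = xnum G t := by
  unfold xnum
  congr 1
  ext r
  exact and_congr_right fun _ => not_congr nested_swap_left

end AuxLemmas

/-- The central counting lemma: for a pair of opposite corners of crossing
separations `s, t` in entanglements, the crossing numbers of the corners sum to
strictly less than those of `s` and `t` (by at least 2). -/
lemma pair_count [Finite V] {G : SimpleGraph V} {s t : GSep V}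
    (hst : Crosses s t) (hs : s ∈ EntSeps G) (ht : t ∈ EntSeps G) :
    xnum G (corner s t) + xnum G (corner (Prod.swap s) (Prod.swap t)) + 2
      ≤ xnum G s + xnum G t := by
  set c := corner s t with hc
  set d := corner (Prod.swap s) (Prod.swap t) with hd
  have hst' : Crosses (Prod.swap s) (Prod.swap t) := crosses_swap_left (crosses_swap_right hst)
  have hsc : Nested s c := nested_left_corner s t
  have htc : Nested t c := nested_right_corner s t
  have hsd : Nested s d := nested_swap_left.mp (nested_left_corner (Prod.swap s) (Prod.swap t))
  have htd : Nested t d := nested_swap_left.mp (nested_right_corner (Prod.swap s) (Prod.swap t))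
  have hsne : s ≠ t := by
    rintro rfl
    exact hst (nested_refl s)
  -- crossing either corner implies crossing s or t
  have key1 : ∀ r : GSep V, Crosses c r → Crosses s r ∨ Crosses t r := by
    intro r hcr
    by_contra hcon
    push_neg at hcon
    obtain ⟨h1, h2⟩ := hcon
    unfold Crosses at h1 h2
    rw [not_not] at h1 h2
    exact hcr (nested_symm (nested_corner_of_nested hst (nested_symm h1) (nested_symm h2)))
  have key1d : ∀ r : GSep V, Crosses d r → Crosses s r ∨ Crosses t r := by
    intro r hdr
    by_contra hcon
    push_neg at hcon
    obtain ⟨h1, h2⟩ := hcon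
    unfold Crosses at h1 h2
    rw [not_not] at h1 h2
    exact hdr (nested_symm (nested_corner_of_nested hst'
      (nested_swap_right.mpr (nested_symm h1)) (nested_swap_right.mpr (nested_symm h2))))
  -- crossing both opposite corners implies crossing both s and t
  have key2 : ∀ r : GSep V, Crosses c r → Crosses d r → Crosses s r ∧ Crosses t r := by
    intro r h1 h2
    constructor
    · intro hn
      rcases nested_opp_of_nested_left (t := t) (nested_symm hn) with hh | hh
      · exact h1 (nested_symm hh)
      · exact h2 (nested_symm hh)
    · intro hn
      rcases nested_opp_of_nested_right (s := s) (nested_symm hn) with hh | hh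
      · exact h1 (nested_symm hh)
      · exact h2 (nested_symm hh)
  set Xs := {r ∈ EntSeps G | Crosses s r} with hXs
  set Xt := {r ∈ EntSeps G | Crosses t r} with hXt
  set Xc := {r ∈ EntSeps G | Crosses c r} with hXc
  set Xd := {r ∈ EntSeps G | Crosses d r} with hXd
  have exs : xnum G s = Xs.ncard := rfl
  have ext' : xnum G t = Xt.ncard := rfl
  have exc : xnum G c = Xc.ncard := rfl
  have exd : xnum G d = Xd.ncard := rfl
  have hcup : Xc ∪ Xd ⊆ Xs ∪ Xt := by
    rintro r (⟨hrE, hrc⟩ | ⟨hrE, hrd⟩)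
    · rcases key1 r hrc with h | h
      · exact Or.inl ⟨hrE, h⟩
      · exact Or.inr ⟨hrE, h⟩
    · rcases key1d r hrd with h | h
      · exact Or.inl ⟨hrE, h⟩
      · exact Or.inr ⟨hrE, h⟩
  have hstsub : ({s, t} : Set (GSep V)) ⊆ Xs ∪ Xt := by
    rintro r (rfl | rfl)
    · exact Or.inr ⟨hs, crosses_symm hst⟩
    · exact Or.inl ⟨ht, hst⟩
  have hdisj : Disjoint (Xc ∪ Xd) ({s, t} : Set (GSep V)) := by
    rw [Set.disjoint_left]
    rintro r (⟨hrE, hrc⟩ | ⟨hrE, hrd⟩) hr <;> rcases hr with rfl | rfl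
    · exact hrc (nested_symm hsc)
    · exact hrc (nested_symm htc)
    · exact hrd (nested_symm hsd)
    · exact hrd (nested_symm htd)
  have hcap : Xc ∩ Xd ⊆ Xs ∩ Xt := by
    rintro r ⟨⟨hrE, hrc⟩, ⟨_, hrd⟩⟩
    obtain ⟨h1, h2⟩ := key2 r hrc hrd
    exact ⟨⟨hrE, h1⟩, ⟨hrE, h2⟩⟩
  have n1 : ((Xc ∪ Xd) ∪ {s, t}).ncard = (Xc ∪ Xd).ncard + ({s, t} : Set (GSep V)).ncard :=
    Set.ncard_union_eq hdisj (Set.toFinite _) (Set.toFinite _)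
  have npair : ({s, t} : Set (GSep V)).ncard = 2 := Set.ncard_pair hsne
  have n2 : ((Xc ∪ Xd) ∪ {s, t}).ncard ≤ (Xs ∪ Xt).ncard :=
    Set.ncard_le_ncard (Set.union_subset hcup hstsub) (Set.toFinite _)
  have n3 : (Xc ∩ Xd).ncard ≤ (Xs ∩ Xt).ncard := Set.ncard_le_ncard hcap (Set.toFinite _)
  have n4 : (Xc ∪ Xd).ncard + (Xc ∩ Xd).ncard = Xc.ncard + Xd.ncard :=
    Set.ncard_union_add_ncard_inter Xc Xd (Set.toFinite _) (Set.toFinite _)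
  have n5 : (Xs ∪ Xt).ncard + (Xs ∩ Xt).ncard = Xs.ncard + Xt.ncard :=
    Set.ncard_union_add_ncard_inter Xs Xt (Set.toFinite _) (Set.toFinite _)
  omega

lemma friendly_key [Fintype V] (G : SimpleGraph V) (s t : GSep V)
    (hs : Friendly G s) (ht : Friendly G t) (hord : sOrd s ≤ sOrd t)
    (hst : Crosses s t) : False := by
  obtain ⟨ε, hε, hsε, hεmin⟩ := hs
  obtain ⟨δ, hδ, htδ, hδmin⟩ := ht
  have hsepS : IsSep G s := (hε.2.1 s hsε).1
  have hsepT : IsSep G t := (hδ.2.1 t htδ).1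
  have hsE : s ∈ EntSeps G := ⟨ε, hε, hsε⟩
  have htE : t ∈ EntSeps G := ⟨δ, hδ, htδ⟩
  have hts : Crosses t s := crosses_symm hst
  -- submodularity
  have hsub1 : sOrd (corner s t) + sOrd (corner (Prod.swap s) (Prod.swap t)) ≤ sOrd s + sOrd t :=
    sOrd_corner_add s t
  have hsub2 : sOrd (corner s (Prod.swap t)) + sOrd (corner (Prod.swap s) t)
      ≤ sOrd s + sOrd t := by
    have h := sOrd_corner_add s (Prod.swap t)
    rw [Prod.swap_swap, sOrd_swap] at h
    exact h
  -- the four entanglement-axiom applications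
  have E1 : sOrd (corner s t) ≤ sOrd s → sOrd (corner s (Prod.swap t)) ≤ sOrd s →
      (sOrd (corner s t) = sOrd s ∧ corner s t ∈ ε) ∨
      (sOrd (corner s (Prod.swap t)) = sOrd s ∧ corner s (Prod.swap t) ∈ ε) :=
    fun h1 h2 => hε.2.2.2 s hsε t hsepT hst h1 h2
  have E2 : sOrd (corner (Prod.swap s) t) ≤ sOrd s →
      sOrd (corner (Prod.swap s) (Prod.swap t)) ≤ sOrd s →
      (sOrd (corner (Prod.swap s) t) = sOrd s ∧ corner (Prod.swap s) t ∈ ε) ∨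
      (sOrd (corner (Prod.swap s) (Prod.swap t)) = sOrd s ∧
        corner (Prod.swap s) (Prod.swap t) ∈ ε) := by
    intro h1 h2
    have h := hε.2.2.2 (Prod.swap s) (hε.2.2.1 s hsε) t hsepT (crosses_swap_left hst)
    rw [sOrd_swap] at h
    exact h h1 h2
  have D1 : sOrd (corner s t) ≤ sOrd t → sOrd (corner (Prod.swap s) t) ≤ sOrd t →
      (sOrd (corner s t) = sOrd t ∧ corner s t ∈ δ) ∨
      (sOrd (corner (Prod.swap s) t) = sOrd t ∧ corner (Prod.swap s) t ∈ δ) := by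
    intro h1 h2
    have h := hδ.2.2.2 t htδ s hsepS hts
    rw [corner_comm t s, corner_comm t (Prod.swap s)] at h
    exact h h1 h2
  have D2 : sOrd (corner s (Prod.swap t)) ≤ sOrd t →
      sOrd (corner (Prod.swap s) (Prod.swap t)) ≤ sOrd t →
      (sOrd (corner s (Prod.swap t)) = sOrd t ∧ corner s (Prod.swap t) ∈ δ) ∨
      (sOrd (corner (Prod.swap s) (Prod.swap t)) = sOrd t ∧
        corner (Prod.swap s) (Prod.swap t) ∈ δ) := by
    intro h1 h2
    have h := hδ.2.2.2 (Prod.swap t) (hδ.2.2.1 t htδ) s hsepS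
      (crosses_symm (crosses_swap_right hst))
    rw [sOrd_swap, corner_comm (Prod.swap t) s, corner_comm (Prod.swap t) (Prod.swap s)] at h
    exact h h1 h2
  -- the two counting inequalities
  have P14 : xnum G (corner s t) + xnum G (corner (Prod.swap s) (Prod.swap t)) + 2
      ≤ xnum G s + xnum G t := pair_count hst hsE htE
  have P23 : xnum G (corner s (Prod.swap t)) + xnum G (corner (Prod.swap s) t) + 2
      ≤ xnum G s + xnum G t := by
    have h := pair_count (crosses_swap_right hst) hsE ⟨δ, hδ, hδ.2.2.1 t htδ⟩
    rw [Prod.swap_swap, xnum_swap] at h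
    exact h
  -- finishers
  have M14a : corner s t ∈ δ → corner (Prod.swap s) (Prod.swap t) ∈ ε → False := by
    intro h1 h2
    have u1 := hδmin _ h1
    have u2 := hεmin _ h2
    omega
  have M14b : corner s t ∈ ε → corner (Prod.swap s) (Prod.swap t) ∈ δ → False := by
    intro h1 h2
    have u1 := hεmin _ h1
    have u2 := hδmin _ h2
    omega
  have M23a : corner s (Prod.swap t) ∈ δ → corner (Prod.swap s) t ∈ ε → False := by
    intro h1 h2
    have u1 := hδmin _ h1
    have u2 := hεmin _ h2
    omega
  have M23b : corner s (Prod.swap t) ∈ ε → corner (Prod.swap s) t ∈ δ → False := by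
    intro h1 h2
    have u1 := hεmin _ h1
    have u2 := hδmin _ h2
    omega
  have MMa : corner s t ∈ δ → corner (Prod.swap s) (Prod.swap t) ∈ δ →
      corner s (Prod.swap t) ∈ ε → corner (Prod.swap s) t ∈ ε → False := by
    intro h1 h2 h3 h4
    have u1 := hδmin _ h1
    have u2 := hδmin _ h2
    have u3 := hεmin _ h3
    have u4 := hεmin _ h4
    omega
  have MMb : corner s t ∈ ε → corner (Prod.swap s) (Prod.swap t) ∈ ε →
      corner s (Prod.swap t) ∈ δ → corner (Prod.swap s) t ∈ δ → False := by
    intro h1 h2 h3 h4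
    have u1 := hεmin _ h1
    have u2 := hεmin _ h2
    have u3 := hδmin _ h3
    have u4 := hδmin _ h4
    omega
  -- abbreviations for the orders
  set a := sOrd (corner s t) with ha
  set b := sOrd (corner s (Prod.swap t)) with hb
  set b' := sOrd (corner (Prod.swap s) t) with hb'
  set a' := sOrd (corner (Prod.swap s) (Prod.swap t)) with ha'
  set σ := sOrd s with hσ
  set τ := sOrd t with hτ
  -- the case analysis
  rcases le_or_gt a τ with hA | hA <;> rcases le_or_gt b τ with hB | hB <;>
    rcases le_or_gt a' τ with hA' | hA' <;> rcases le_or_gt b' τ with hB' | hB'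
  -- 1: TTTT
  · rcases D1 hA hB' with ⟨haτ, hc1δ⟩ | ⟨hb'τ, hc3δ⟩
    · rcases D2 hB hA' with ⟨hbτ, hc2δ⟩ | ⟨ha'τ, hc4δ⟩
      · rcases E2 (by omega) (by omega) with ⟨_, hc3ε⟩ | ⟨_, hc4ε⟩
        · exact M23a hc2δ hc3ε
        · exact M14a hc1δ hc4ε
      · rcases E1 (by omega) (by omega) with ⟨_, hc1ε⟩ | ⟨_, hc2ε⟩
        · exact M14b hc1ε hc4δ
        · rcases E2 (by omega) (by omega) with ⟨_, hc3ε⟩ | ⟨_, hc4ε⟩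
          · exact MMa hc1δ hc4δ hc2ε hc3ε
          · exact M14a hc1δ hc4ε
    · rcases D2 hB hA' with ⟨hbτ, hc2δ⟩ | ⟨ha'τ, hc4δ⟩
      · rcases E1 (by omega) (by omega) with ⟨_, hc1ε⟩ | ⟨_, hc2ε⟩
        · rcases E2 (by omega) (by omega) with ⟨_, hc3ε⟩ | ⟨_, hc4ε⟩
          · exact M23a hc2δ hc3ε
          · exact MMb hc1ε hc4ε hc2δ hc3δ
        · exact M23b hc2ε hc3δ
      · rcases E1 (by omega) (by omega) with ⟨_, hc1ε⟩ | ⟨_, hc2ε⟩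
        · exact M14b hc1ε hc4δ
        · exact M23b hc2ε hc3δ
  -- 2: TTTF
  · rcases D2 hB hA' with ⟨hbτ, _⟩ | ⟨ha'τ, hc4δ⟩
    · omega
    · rcases E1 (by omega) (by omega) with ⟨_, hc1ε⟩ | ⟨hbσ, _⟩
      · exact M14b hc1ε hc4δ
      · omega
  -- 3: TTFT
  · rcases D1 hA hB' with ⟨haτ, _⟩ | ⟨hb'τ, hc3δ⟩
    · omega
    · rcases E1 (by omega) (by omega) with ⟨haσ, _⟩ | ⟨_, hc2ε⟩
      · omega
      · exact M23b hc2ε hc3δ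
  -- 4: TTFF
  · rcases E1 (by omega) (by omega) with ⟨h, _⟩ | ⟨h, _⟩ <;> omega
  -- 5: TFTT
  · rcases D1 hA hB' with ⟨haτ, hc1δ⟩ | ⟨hb'τ, _⟩
    · rcases E2 (by omega) (by omega) with ⟨hb'σ, _⟩ | ⟨_, hc4ε⟩
      · omega
      · exact M14a hc1δ hc4ε
    · omega
  -- 6: TFTF
  · omega
  -- 7: TFFT
  · rcases D1 hA hB' with ⟨haτ, _⟩ | ⟨hb'τ, _⟩ <;> omega
  -- 8: TFFF
  · omega
  -- 9: FTTT
  · rcases D2 hB hA' with ⟨hbτ, hc2δ⟩ | ⟨ha'τ, _⟩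
    · rcases E2 (by omega) (by omega) with ⟨_, hc3ε⟩ | ⟨ha'σ, _⟩
      · exact M23a hc2δ hc3ε
      · omega
    · omega
  -- 10: FTTF
  · rcases D2 hB hA' with ⟨hbτ, _⟩ | ⟨ha'τ, _⟩ <;> omega
  -- 11: FTFT
  · omega
  -- 12: FTFF
  · omega
  -- 13: FFTT
  · rcases E2 (by omega) (by omega) with ⟨h, _⟩ | ⟨h, _⟩ <;> omega
  -- 14: FFTF
  · omega
  -- 15: FFFT
  · omega
  -- 16: FFFF
  · omega

/-- For every finite graph `G`, the set of friendly separations of `G` is a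
nested set of separations. -/
theorem stmt_10 {V : Type*} [Fintype V] (G : SimpleGraph V) :
    ∀ s t : GSep V, Friendly G s → Friendly G t → Nested s t := by
  intro s t hs ht
  by_contra hcross
  rcases le_total (sOrd s) (sOrd t) with h | h
  · exact friendly_key G s t hs ht h hcross
  · exact friendly_key G t s ht hs h (crosses_symm hcross)
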